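/- arXiv:2604.05953 — 7 statements merged into one kernel-verified Lean document; each statement's English description precedes it below -/
import Mathlib

section
/- Let n, m ≥ 1 and let V_1, …, V_m be nonempty subsets of {1,…,n} such that each V_c is an interval (V_c = {min(V_c),…,max(V_c)}) and the family (V_c)_{c=1}^m is endpoint-nested. Then there exists a permutation σ of {1,…,m} such that for every i ∈ {1,…,n}, the index set {j ∈ {1,…,m} : i ∈ V_{σ(j)}} is a (possibly empty) set of consecutive integers. (Every Endpoint-Nested approval profile is Candidate Interval.) -/
/-- Every Endpoint-Nested approval profile is Candidate Interval.
Voters are `{1,…,n}`; candidates are `{1,…,m}` (represented as `Fin m`); candidate `c`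
has supporter interval `V c = {(V c).1, …, (V c).2}` with `1 ≤ (V c).1 ≤ (V c).2 ≤ n`
(nonempty intervals).  The family is endpoint-nested.  Then there is a permutation `σ`
of the candidates such that, for every voter `i ∈ {1,…,n}`, the set of positions `j`
with `i ∈ V (σ j)` is a set of consecutive integers (formalized as convexity of the
index set). -/
theorem stmt_1 (n m : ℕ) (hn : 1 ≤ n) (hm : 1 ≤ m)
    (V : Fin m → ℕ × ℕ)
    (hV : ∀ c, 1 ≤ (V c).1 ∧ (V c).1 ≤ (V c).2 ∧ (V c).2 ≤ n)
    (hEN : ∀ c c' : Fin m, (V c').1 ≤ (V c).1 → (V c).2 ≤ (V c').2 →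
      (V c).1 = (V c').1 ∨ (V c).2 = (V c').2) :
    ∃ σ : Equiv.Perm (Fin m), ∀ i ∈ Finset.Icc 1 n,
      ∀ j₁ j₂ j₃ : Fin m, j₁ ≤ j₂ → j₂ ≤ j₃ →
        ((V (σ j₁)).1 ≤ i ∧ i ≤ (V (σ j₁)).2) →
        ((V (σ j₃)).1 ≤ i ∧ i ≤ (V (σ j₃)).2) →
        ((V (σ j₂)).1 ≤ i ∧ i ≤ (V (σ j₂)).2) := by
  classical
  set key : Fin m → ℕ := fun c => (V c).2 * (n + 2) + (V c).1 with hkey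
  -- decoding the lexicographic key
  have decode : ∀ a b : Fin m, key a ≤ key b →
      (V a).2 ≤ (V b).2 ∧ ((V b).2 ≤ (V a).2 → (V a).1 ≤ (V b).1) := by
    intro a b hab
    obtain ⟨ha1, ha2, ha3⟩ := hV a
    obtain ⟨hb1, hb2, hb3⟩ := hV b
    simp only [hkey] at hab
    have hla : (V a).1 ≤ n := le_trans ha2 ha3
    have hlb : (V b).1 ≤ n := le_trans hb2 hb3
    constructor
    · by_contra h
      push_neg at h
      nlinarith
    · intro h
      nlinarith
  refine ⟨Tuple.sort key, ?_⟩
  intro i hi j₁ j₂ j₃ h12 h23 h1 h3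
  have hmono := Tuple.monotone_sort key
  have k12 := decode _ _ (hmono h12)
  have k23 := decode _ _ (hmono h23)
  set c1 := Tuple.sort key j₁ with hc1
  set c2 := Tuple.sort key j₂ with hc2
  set c3 := Tuple.sort key j₃ with hc3
  -- i ≤ r₂ since i ≤ r₁ ≤ r₂
  have hi2 : i ≤ (V c2).2 := le_trans h1.2 k12.1
  refine ⟨?_, hi2⟩
  by_contra h
  push_neg at h  -- i < l₂
  have h32 : (V c3).1 ≤ (V c2).1 := le_trans h3.1 (le_of_lt h)
  have := hEN c2 c3 h32 k23.1
  rcases this with heq | heq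
  · exact absurd (heq ▸ h3.1) (not_le.mpr (heq ▸ h))
  · have := k23.2 (le_of_eq heq.symm)
    omega
end

section
/- Let U be a family of u intervals over {1,…,n}, let l_1 ≤ … ≤ l_u be its left endpoints sorted in non-decreasing order and r_1 ≤ … ≤ r_u its right endpoints sorted in non-decreasing order, and let U* = {[l_j, r_j] : j = 1,…,u} be the canonical form of U. Then for every point i ∈ {1,…,n}, the coverage of i by U* equals the coverage of i by U, i.e., c_{U*}(i) = c_U(i). -/
/-- The coverage of a point `i` by a family `X` of intervals (pairs `(l, r)` identified
with `{l,…,r}`): the number of intervals in `X`, with multiplicity, containing `i`. -/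
def coverage (X : Multiset (ℕ × ℕ)) (i : ℕ) : ℕ :=
  (X.filter fun p => p.1 ≤ i ∧ i ≤ p.2).card

/-- The canonical form `U*` of a family `U` of intervals: pair the `j`-th smallest left
endpoint with the `j`-th smallest right endpoint, for `j = 1,…,|U|`. -/
def canonical (U : Multiset (ℕ × ℕ)) : Multiset (ℕ × ℕ) :=
  ((Multiset.sort (U.map Prod.fst) (· ≤ ·)).zip
    (Multiset.sort (U.map Prod.snd) (· ≤ ·)) : List (ℕ × ℕ))

/-! If every interval of a family `X` satisfies `l ≤ r`, each interval satisfies at least one of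
`l ≤ i`, `i ≤ r`, and contains `i` iff it satisfies both; hence
`c_X(i) + |X| = #{l ≤ i} + #{r ≥ i}`, which depends only on the multisets of left and right
endpoints. These are the same for `U*` as for `U`, so it remains to see that `l_j ≤ r_j`. At most
`j - 1` left endpoints are `< l_j`; if `r_j < l_j`, then `r_1, …, r_j` are `< l_j`, and since each
interval's right endpoint bounds its left one, so are at least `j` left endpoints. -/

namespace List

variable {α : Type*} [LinearOrder α]

theorem SortedLE.countP_lt_getElem_le {l : List α} (hl : l.SortedLE) {j : ℕ}
    (hj : j < l.length) : l.countP (· < l[j]) ≤ j := by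
  have hdrop : (l.drop j).countP (· < l[j]) = 0 := by
    rw [countP_eq_zero]
    intro a ha
    obtain ⟨m, hm, rfl⟩ := mem_iff_getElem.mp ha
    simpa using hl.getElem_le_getElem_of_le (hj := by simp at hm; omega) (Nat.le_add_right j m)
  calc l.countP (· < l[j])
      = (l.take j).countP (· < l[j]) + (l.drop j).countP (· < l[j]) := by
        rw [← countP_append, take_append_drop]
    _ ≤ j := by
        rw [hdrop, Nat.add_zero]
        exact countP_le_length.trans (length_take_le _ _)

theorem SortedLE.lt_countP_lt_of_getElem_lt {l : List α} (hl : l.SortedLE) {j : ℕ}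
    (hj : j < l.length) {t : α} (ht : l[j] < t) : j < l.countP (· < t) := by
  have htake : (l.take (j + 1)).countP (· < t) = j + 1 := by
    rw [countP_eq_length.mpr, length_take_of_le (by omega)]
    intro a ha
    obtain ⟨m, hm, rfl⟩ := mem_iff_getElem.mp ha
    have hmj : m ≤ j := by simp at hm; omega
    simpa using (hl.getElem_le_getElem_of_le hmj).trans_lt ht
  calc j < (l.take (j + 1)).countP (· < t) := by omega
    _ ≤ l.countP (· < t) := (take_prefix _ _).countP_le

theorem SortedLE.getElem_le_getElem_of_countP_lt_le {l r : List α} (hl : l.SortedLE)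
    (hr : r.SortedLE) (hlen : l.length = r.length)
    (hcount : ∀ t, r.countP (· < t) ≤ l.countP (· < t)) {j : ℕ} (hj : j < l.length) :
    l[j] ≤ r[j] := by
  by_contra! h
  have := hcount l[j]
  have := hl.countP_lt_getElem_le hj
  have := hr.lt_countP_lt_of_getElem_lt (hlen ▸ hj) h
  omega

end List

theorem Multiset.countP_lt_map_snd_le {α : Type*} [LinearOrder α] (U : Multiset (α × α))
    (hU : ∀ p ∈ U, p.1 ≤ p.2) (t : α) :
    (U.map Prod.snd).countP (· < t) ≤ (U.map Prod.fst).countP (· < t) := by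
  rcases U with ⟨l⟩
  simp only [Multiset.quot_mk_to_coe'', Multiset.map_coe, Multiset.coe_countP, List.countP_map]
  exact List.countP_mono_left fun p hp h => by simpa using (hU p hp).trans_lt (by simpa using h)

theorem map_fst_canonical (U : Multiset (ℕ × ℕ)) :
    (canonical U).map Prod.fst = U.map Prod.fst := by
  rw [canonical, Multiset.map_coe, List.map_fst_zip (by simp), Multiset.sort_eq]

theorem map_snd_canonical (U : Multiset (ℕ × ℕ)) :
    (canonical U).map Prod.snd = U.map Prod.snd := by
  rw [canonical, Multiset.map_coe, List.map_snd_zip (by simp), Multiset.sort_eq]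

theorem card_canonical (U : Multiset (ℕ × ℕ)) :
    Multiset.card (canonical U) = Multiset.card U := by
  simpa using congrArg Multiset.card (map_fst_canonical U)

theorem countP_fst_canonical (U : Multiset (ℕ × ℕ)) (P : ℕ → Prop) [DecidablePred P] :
    (canonical U).countP (fun p => P p.1) = U.countP (fun p => P p.1) := by
  rw [Multiset.countP_eq_card_filter, Multiset.countP_eq_card_filter, ← Multiset.countP_map,
    ← Multiset.countP_map, map_fst_canonical]

theorem countP_snd_canonical (U : Multiset (ℕ × ℕ)) (P : ℕ → Prop) [DecidablePred P] :
    (canonical U).countP (fun p => P p.2) = U.countP (fun p => P p.2) := by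
  rw [Multiset.countP_eq_card_filter, Multiset.countP_eq_card_filter, ← Multiset.countP_map,
    ← Multiset.countP_map, map_snd_canonical]

theorem fst_le_snd_of_mem_canonical {U : Multiset (ℕ × ℕ)} (hU : ∀ p ∈ U, p.1 ≤ p.2)
    {p : ℕ × ℕ} (hp : p ∈ canonical U) : p.1 ≤ p.2 := by
  set L := (U.map Prod.fst).sort (· ≤ ·)
  set R := (U.map Prod.snd).sort (· ≤ ·)
  have hcount (t : ℕ) : R.countP (· < t) ≤ L.countP (· < t) := by
    simpa only [← Multiset.coe_countP, L, R, Multiset.sort_eq] using U.countP_lt_map_snd_le hU t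
  obtain ⟨j, hj, rfl⟩ := List.mem_iff_getElem.mp (show p ∈ L.zip R from hp)
  have hjL : j < L.length := by rw [List.length_zip] at hj; omega
  rw [List.getElem_zip]
  exact (Multiset.pairwise_sort _ _).sortedLE.getElem_le_getElem_of_countP_lt_le
    (Multiset.pairwise_sort _ _).sortedLE (by simp) hcount hjL

theorem coverage_add_card (X : Multiset (ℕ × ℕ)) (hX : ∀ p ∈ X, p.1 ≤ p.2) (i : ℕ) :
    coverage X i + Multiset.card X =
      X.countP (fun p => p.1 ≤ i) + X.countP (fun p => i ≤ p.2) := by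
  induction X using Multiset.induction with
  | empty => simp [coverage]
  | cons p X ih =>
    have hp : p.1 ≤ p.2 := hX p (Multiset.mem_cons_self _ _)
    have := ih fun q hq => hX q (Multiset.mem_cons_of_mem hq)
    by_cases h1 : p.1 ≤ i <;> by_cases h2 : i ≤ p.2 <;>
      simp [coverage, h1, h2] at this ⊢ <;> omega

/-- For every family `U` of intervals over `{1,…,n}` and every point
`i ∈ {1,…,n}`, the coverage of `i` by the canonical form `U*` equals the coverage of
`i` by `U`. -/
theorem stmt_4 (n : ℕ) (U : Multiset (ℕ × ℕ))
    (hU : ∀ p ∈ U, 1 ≤ p.1 ∧ p.1 ≤ p.2 ∧ p.2 ≤ n) :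
    ∀ i ∈ Finset.Icc 1 n, coverage (canonical U) i = coverage U i := by
  intro i _
  have hle : ∀ p ∈ U, p.1 ≤ p.2 := fun p hp => (hU p hp).2.1
  have hcovU := coverage_add_card U hle i
  have hcan := coverage_add_card (canonical U) (fun p => fst_le_snd_of_mem_canonical hle) i
  rw [card_canonical, countP_fst_canonical U (· ≤ i), countP_snd_canonical U (i ≤ ·)] at hcan
  omega
end

section
/- Let J_1, …, J_u be intervals over {1,…,n} such that min(J_j) ≤ min(J_{j+1}) and max(J_j) ≤ max(J_{j+1}) for all j ∈ {1,…,u−1}. Let A = {J_j : j even} and B = {J_j : j odd} be the families of even-indexed and odd-indexed intervals. Then for every point i ∈ {1,…,n}, the coverages satisfy |c_A(i) − c_B(i)| ≤ 1. -/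
open Finset

lemma Fin.monotone_of_le_succ {α : Type*} [Preorder α] {u : ℕ} {f : Fin u → α}
    (hf : ∀ (j : ℕ) (h : j + 1 < u), f ⟨j, Nat.lt_of_succ_lt h⟩ ≤ f ⟨j + 1, h⟩) : Monotone f := by
  cases u with
  | zero => exact fun a => a.elim0
  | succ u => exact Fin.monotone_iff_le_succ.2 fun j => hf j (by omega)

lemma Monotone.ordConnected_setOf_fst_le_and_le_snd {ι α : Type*} [Preorder ι] [Preorder α]
    {J : ι → α × α} (hJ : Monotone J) (i : α) :
    {j | (J j).1 ≤ i ∧ i ≤ (J j).2}.OrdConnected :=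
  ⟨fun _ ha _ hc _ hk => ⟨((hJ hk.2).1).trans hc.1, ha.2.trans (hJ hk.1).2⟩⟩

lemma Set.OrdConnected.image_fin_val {u : ℕ} {s : Set (Fin u)} (hs : s.OrdConnected) :
    (Fin.val '' s).OrdConnected := by
  refine ⟨?_⟩
  rintro _ ⟨a, ha, rfl⟩ _ ⟨c, hc, rfl⟩ k ⟨hak, hkc⟩
  exact ⟨⟨k, by omega⟩, hs.out ha hc ⟨hak, hkc⟩, rfl⟩

lemma Finset.eq_Icc_min'_max'_of_ordConnected {α : Type*} [LinearOrder α]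
    [LocallyFiniteOrder α] {s : Finset α} (hs : s.Nonempty) (h : (s : Set α).OrdConnected) :
    s = Icc (s.min' hs) (s.max' hs) := by
  rw [← coe_inj, coe_Icc]
  exact (h.out (s.min'_mem hs) (s.max'_mem hs)).antisymm'
    fun x hx => ⟨s.min'_le x hx, s.le_max' x hx⟩

lemma Nat.card_filter_mod_two_eq_one_sub_card_filter_mod_two_eq_zero_Ico {a b : ℕ} (hab : a ≤ b) :
    (#{j ∈ Ico a b | j % 2 = 1} : ℤ) - #{j ∈ Ico a b | j % 2 = 0} = a % 2 - b % 2 := by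
  induction b, hab using Nat.le_induction with
  | base => simp
  | succ b hab ih =>
    rw [Nat.Ico_succ_right_eq_insert_Ico hab, filter_insert, filter_insert]
    rcases Nat.mod_two_eq_zero_or_one b with hb | hb <;>
      simp only [hb, reduceIte, zero_ne_one, one_ne_zero, mem_filter, mem_Ico, lt_self_iff_false,
        and_false, and_true, not_false_eq_true, card_insert_of_notMem, Nat.cast_add,
        Nat.cast_one] <;> omega

lemma Nat.abs_card_filter_mod_two_sub_le_one_of_ordConnected {s : Finset ℕ}
    (hs : (s : Set ℕ).OrdConnected) :
    |(#{j ∈ s | j % 2 = 1} : ℤ) - #{j ∈ s | j % 2 = 0}| ≤ 1 := by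
  rcases s.eq_empty_or_nonempty with rfl | hne
  · simp
  rw [eq_Icc_min'_max'_of_ordConnected hne hs, ← Ico_add_one_right_eq_Icc,
    card_filter_mod_two_eq_one_sub_card_filter_mod_two_eq_zero_Ico
      ((s.min'_le _ (s.max'_mem hne)).trans (Nat.le_add_right _ 1)), abs_le]
  constructor <;> omega

lemma Fin.abs_card_filter_mod_two_sub_le_one_of_ordConnected {u : ℕ} {s : Finset (Fin u)}
    (hs : (s : Set (Fin u)).OrdConnected) :
    |(#{j ∈ s | j.val % 2 = 1} : ℤ) - #{j ∈ s | j.val % 2 = 0}| ≤ 1 := by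
  have hval : ((s.map valEmbedding : Finset ℕ) : Set ℕ).OrdConnected := by
    simpa using hs.image_fin_val
  simpa [filter_map, Function.comp_def] using
    Nat.abs_card_filter_mod_two_sub_le_one_of_ordConnected hval

lemma coverage_map {ι : Type*} (J : ι → ℕ × ℕ) (s : Finset ι) (i : ℕ) :
    coverage (s.val.map J) i = #{j ∈ s | (J j).1 ≤ i ∧ i ≤ (J j).2} := by
  rw [coverage, Multiset.filter_map, Multiset.card_map]
  rfl

/-- Let `J_1, …, J_u` be intervals over `{1,…,n}` (here `J : Fin u → ℕ × ℕ`,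
with `J ⟨j-1,_⟩` playing the role of the 1-based `J_j`) whose left and right endpoints
are non-decreasing along consecutive indices.  Let `A` be the family of even-indexed
intervals (1-based, i.e. 0-based odd positions) and `B` the family of odd-indexed ones.
Then for every point `i ∈ {1,…,n}`, `|c_A(i) − c_B(i)| ≤ 1`. -/
theorem stmt_5 (n u : ℕ) (J : Fin u → ℕ × ℕ)
    (hmono : ∀ (j : ℕ) (h : j + 1 < u),
      (J ⟨j, by omega⟩).1 ≤ (J ⟨j + 1, h⟩).1 ∧ (J ⟨j, by omega⟩).2 ≤ (J ⟨j + 1, h⟩).2)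
    (A B : Multiset (ℕ × ℕ))
    (hA : A = Multiset.map J (Finset.univ.filter fun j : Fin u => (j : ℕ) % 2 = 1).val)
    (hB : B = Multiset.map J (Finset.univ.filter fun j : Fin u => (j : ℕ) % 2 = 0).val) :
    ∀ i ∈ Finset.Icc 1 n, |(coverage A i : ℤ) - (coverage B i : ℤ)| ≤ 1 := by
  intro i _
  have hJmono : Monotone J := Fin.monotone_of_le_succ fun j h => Prod.mk_le_mk.2 (hmono j h)
  have hconn : ((univ.filter fun j => (J j).1 ≤ i ∧ i ≤ (J j).2 : Finset (Fin u)) :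
      Set (Fin u)).OrdConnected := by
    simpa using hJmono.ordConnected_setOf_fst_le_and_le_snd i
  rw [hA, hB, coverage_map, coverage_map, filter_comm, filter_comm (fun j : Fin u => _ % 2 = 0)]
  exact Fin.abs_card_filter_mod_two_sub_le_one_of_ordConnected hconn
end

section
/- Let f_1, …, f_n : ℕ → ℝ be concave functions and let F(X) = ∑_{i=1}^n f_i(c_X(i)) for a family X of intervals over {1,…,n}. Let S and S' be families of intervals over {1,…,n}, let U be their multiset sum (so |U| = |S| + |S'|), let U* = {J_1, …, J_{|U|}} be the canonical form of U (indexed so that left endpoints and right endpoints are both non-decreasing in the index), and let A* = {J_j : j even} and B* = {J_j : j odd}. Then F(A*) + F(B*) ≥ F(S) + F(S'). -/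
/-- The canonical form `U*` of a family `U` of intervals, as a list `J_1, …, J_u`
(0-based: `J_j` is entry `j-1`): pair the `j`-th smallest left endpoint with the
`j`-th smallest right endpoint; both endpoint sequences are non-decreasing in the
index. -/
def canonicalList (U : Multiset (ℕ × ℕ)) : List (ℕ × ℕ) :=
  (Multiset.sort (U.map Prod.fst) (· ≤ ·)).zip
    (Multiset.sort (U.map Prod.snd) (· ≤ ·))

open Finset

section Concave

variable {f : ℕ → ℝ}

theorem antitone_sub_of_concave (hf : ∀ t, f t + f (t + 2) ≤ 2 * f (t + 1)) :
    Antitone fun t => f (t + 1) - f t :=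
  antitone_nat_of_succ_le fun t => by linarith [hf t]

theorem add_le_add_of_balanced (hf : ∀ t, f t + f (t + 2) ≤ 2 * f (t + 1)) {s s' x y : ℕ}
    (hsum : x + y = s + s') (hxy : y ≤ x + 1) (hyx : x ≤ y + 1) :
    f s + f s' ≤ f x + f y := by
  wlog hss' : s ≤ s' generalizing s s'
  · rw [add_comm (f s)]
    exact this (by omega) (by omega)
  induction hd : s' - s using Nat.strong_induction_on generalizing s s' with
  | _ d ih =>
  by_cases hclose : s' ≤ s + 1
  · obtain ⟨rfl, rfl⟩ | ⟨rfl, rfl⟩ : (x = s ∧ y = s') ∨ (x = s' ∧ y = s) := by omega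
    · rfl
    · rw [add_comm]
  · obtain ⟨m, rfl⟩ : ∃ m, s' = m + 1 := ⟨s' - 1, by omega⟩
    have hstep : f s + f (m + 1) ≤ f (s + 1) + f m := by
      have := antitone_sub_of_concave hf (show s ≤ m by omega)
      dsimp only at this
      linarith
    exact hstep.trans (ih (d - 2) (by omega) (by omega) (by omega) (by omega))

end Concave

theorem List.Pairwise.apply_getElem_iff_lt_countP {α : Type*} {r : α → α → Prop}
    {p : α → Prop} [DecidablePred p] (hp : ∀ x y, r x y → p y → p x) {l : List α}
    (hl : l.Pairwise r) {j : ℕ} (hj : j < l.length) : p l[j] ↔ j < l.countP p := by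
  induction l generalizing j with
  | nil => simp at hj
  | cons x t ih =>
    rw [List.pairwise_cons] at hl
    have htail : ¬p x → t.countP p = 0 := fun hx =>
      List.countP_eq_zero.2 fun y hy hpy => hx (hp x y (hl.1 y hy) (by simpa using hpy))
    cases j with
    | zero => by_cases hx : p x <;> simp [hx, htail]
    | succ j =>
      rw [List.getElem_cons_succ, ih hl.2 (by simpa using hj), List.countP_cons]
      by_cases hx : p x
      · simp [hx]
      · simp [hx, htail hx]

theorem card_filter_Ico_mod_two {c : ℕ} (hc : c < 2) (b a : ℕ) :
    #{j ∈ Ico b a | j % 2 = c} = (a + 1 - c) / 2 - (b + 1 - c) / 2 := by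
  induction a with
  | zero =>
    rw [Ico_eq_empty_of_le b.zero_le, filter_empty, card_empty]
    omega
  | succ a ih =>
    rcases le_or_gt b a with hba | hab
    · rw [Nat.Ico_succ_right_eq_insert_Ico hba, filter_insert]
      split_ifs with ha
      · rw [card_insert_of_notMem (by simp), ih]
        omega
      · omega
    · rw [Ico_eq_empty_of_le hab, filter_empty, card_empty]
      omega

-- Index `j` here is 0-based, so `A* = parityClass (canonicalList U) 1`.
def parityClass {α : Type*} (L : List α) (c : ℕ) : Multiset α :=
  ((L.zipIdx.filter fun p => p.2 % 2 = c).map Prod.fst : List α)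

theorem countP_parityClass {α : Type*} (L : List α) (c : ℕ) (q : α → Prop) [DecidablePred q] :
    (parityClass L c).countP q = #{j : Fin L.length | j % 2 = c ∧ q L[j]} := by
  have hzip : L.zipIdx = (List.finRange L.length).map fun j : Fin L.length => (L[j], j.val) :=
    List.ext_getElem (by simp) fun j h₁ h₂ => by simp [List.getElem_zipIdx]
  rw [parityClass, Multiset.coe_countP, hzip, List.countP_map, List.countP_filter, List.countP_map]
  change _ = Multiset.card (Multiset.filter _ (List.finRange L.length : Multiset (Fin L.length)))
  rw [← Multiset.countP_eq_card_filter, Multiset.coe_countP]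
  exact List.countP_congr fun j _ => by simp [and_comm]

theorem countP_sort_map {α β : Type*} [LinearOrder β] (s : Multiset α) (g : α → β)
    (q : β → Prop) [DecidablePred q] :
    (Multiset.sort (s.map g) (· ≤ ·)).countP q = s.countP (q ∘ g) := by
  rw [← Multiset.coe_countP, Multiset.sort_eq, Multiset.countP_map, Multiset.countP_eq_card_filter]
  rfl

section Canonical

variable {U : Multiset (ℕ × ℕ)} {i j : ℕ}

theorem length_canonicalList : (canonicalList U).length = Multiset.card U := by
  simp [canonicalList]

theorem fst_getElem_canonicalList_le_iff (hj : j < (canonicalList U).length) :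
    (canonicalList U)[j].1 ≤ i ↔ j < U.countP (·.1 ≤ i) := by
  simp only [canonicalList, List.getElem_zip]
  rw [(Multiset.pairwise_sort _ _).apply_getElem_iff_lt_countP (p := (· ≤ i))
    fun x y hxy hy => hxy.trans hy, countP_sort_map]
  rfl

theorem le_snd_getElem_canonicalList_iff (hj : j < (canonicalList U).length) :
    i ≤ (canonicalList U)[j].2 ↔ U.countP (·.2 < i) ≤ j := by
  simp only [canonicalList, List.getElem_zip]
  rw [← not_lt, (Multiset.pairwise_sort _ _).apply_getElem_iff_lt_countP (p := (· < i))
    fun x y hxy hy => hxy.trans_lt hy, countP_sort_map, not_lt]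
  rfl

theorem coverage_parityClass_canonicalList (c i : ℕ) :
    coverage (parityClass (canonicalList U) c) i =
      #{j ∈ Ico (U.countP (·.2 < i)) (U.countP (·.1 ≤ i)) | j % 2 = c} := by
  set b := U.countP (·.2 < i)
  set a := U.countP (·.1 ≤ i)
  have hcover : ∀ j : Fin (canonicalList U).length,
      (canonicalList U)[j].1 ≤ i ∧ i ≤ (canonicalList U)[j].2 ↔ (j : ℕ) ∈ Ico b a := fun j => by
    rw [Fin.getElem_fin, fst_getElem_canonicalList_le_iff j.2,
      le_snd_getElem_canonicalList_iff j.2, mem_Ico, and_comm]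
  have ha : a ≤ (canonicalList U).length := length_canonicalList.symm ▸ Multiset.countP_le_card _ _
  rw [coverage, ← Multiset.countP_eq_card_filter, countP_parityClass]
  simp only [hcover]
  rw [card_filter, Fin.sum_univ_eq_sum_range (fun j => if j % 2 = c ∧ j ∈ Ico b a then 1 else 0),
    ← card_filter]
  congr 1
  ext j
  simp only [mem_filter, mem_range, mem_Ico]
  omega

end Canonical

theorem coverage_add (X Y : Multiset (ℕ × ℕ)) (i : ℕ) :
    coverage (X + Y) i = coverage X i + coverage Y i := by
  simp only [coverage, Multiset.filter_add, Multiset.card_add]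

theorem countP_fst_le_eq_coverage_add {U : Multiset (ℕ × ℕ)} (hU : ∀ p ∈ U, p.1 ≤ p.2) (i : ℕ) :
    U.countP (·.1 ≤ i) = coverage U i + U.countP (·.2 < i) := by
  induction U using Multiset.induction_on with
  | empty => simp [coverage]
  | cons p U ih =>
    have hp := hU p (Multiset.mem_cons_self p U)
    have ih := ih fun q hq => hU q (Multiset.mem_cons_of_mem hq)
    simp only [coverage, ← Multiset.countP_eq_card_filter, Multiset.countP_cons] at ih ⊢
    split_ifs <;> omega

/-- Let `f_1, …, f_n : ℕ → ℝ` be concave and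
`F X = ∑_{i=1}^n f_i (c_X(i))`.  Let `S, S'` be families of intervals over `{1,…,n}`,
`U = S + S'` their multiset sum, `U* = {J_1, …, J_{|U|}}` its canonical form, and let
`A*` consist of the even-indexed (1-based; i.e. 0-based odd positions) and `B*` of the
odd-indexed intervals of `U*`.  Then `F A* + F B* ≥ F S + F S'`. -/
theorem stmt_7 (n : ℕ) (f : ℕ → ℕ → ℝ)
    (hconc : ∀ i ∈ Finset.Icc 1 n, ∀ t : ℕ, f i t + f i (t + 2) ≤ 2 * f i (t + 1))
    (S S' : Multiset (ℕ × ℕ))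
    (hS : ∀ p ∈ S, 1 ≤ p.1 ∧ p.1 ≤ p.2 ∧ p.2 ≤ n)
    (hS' : ∀ p ∈ S', 1 ≤ p.1 ∧ p.1 ≤ p.2 ∧ p.2 ≤ n)
    (A B : Multiset (ℕ × ℕ))
    (hA : A = ((((canonicalList (S + S')).zipIdx.filter
      fun p => p.2 % 2 = 1).map Prod.fst : List (ℕ × ℕ)) : Multiset (ℕ × ℕ)))
    (hB : B = ((((canonicalList (S + S')).zipIdx.filter
      fun p => p.2 % 2 = 0).map Prod.fst : List (ℕ × ℕ)) : Multiset (ℕ × ℕ))) :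
    (∑ i ∈ Finset.Icc 1 n, f i (coverage S i)) +
      (∑ i ∈ Finset.Icc 1 n, f i (coverage S' i)) ≤
    (∑ i ∈ Finset.Icc 1 n, f i (coverage A i)) +
      (∑ i ∈ Finset.Icc 1 n, f i (coverage B i)) := by
  have hU : ∀ p ∈ S + S', p.1 ≤ p.2 := fun p hp => by
    rcases Multiset.mem_add.1 hp with hp | hp
    exacts [(hS p hp).2.1, (hS' p hp).2.1]
  rw [← sum_add_distrib, ← sum_add_distrib]
  refine sum_le_sum fun i hi => ?_
  have hsplit := coverage_add S S' i ▸ countP_fst_le_eq_coverage_add hU i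
  rw [show A = parityClass (canonicalList (S + S')) 1 from hA,
    show B = parityClass (canonicalList (S + S')) 0 from hB, coverage_parityClass_canonicalList,
    coverage_parityClass_canonicalList, card_filter_Ico_mod_two one_lt_two,
    card_filter_Ico_mod_two two_pos]
  exact add_le_add_of_balanced (hconc i hi) (by omega) (by omega) (by omega)
end

section
/- Every family U of intervals over {1,…,n} can be obtained from its canonical form U* by a finite sequence of right-endpoint swap operations; that is, the pair (U*, U) belongs to the reflexive-transitive closure of the one-step right-endpoint swap relation on families of intervals. -/
/-- A right-endpoint swap operation: `T` contains intervals `I₁ = [l_a, r_a]` and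
`I₂ = [l_b, r_b]` with `l_a ≤ l_b ≤ r_a ≤ r_b`, and `T'` is obtained from `T` by
removing one copy of each and adding `I_∪ = [l_a, r_b]` and `I_∩ = [l_b, r_a]`. -/
def SwapStep (T T' : Multiset (ℕ × ℕ)) : Prop :=
  ∃ la lb ra rb : ℕ, la ≤ lb ∧ lb ≤ ra ∧ ra ≤ rb ∧
    ∃ T₀ : Multiset (ℕ × ℕ),
      T = (la, ra) ::ₘ (lb, rb) ::ₘ T₀ ∧ T' = (la, rb) ::ₘ (lb, ra) ::ₘ T₀

/-!
Call a pair of intervals `[a, d] ⊋ [b, c]` with `a < b` and `c < d` *nested*. Replacing a nested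
pair by the crossing pair `[a, c], [b, d]` keeps the multisets of left and right endpoints, hence
the canonical form, and is undone by one swap. It strictly decreases the potential
`∑ (r - l) * r`, by `(b - a) * (d - c)`, so after finitely many such steps no nested pair is left.
A family without nested pairs, listed in lexicographic order, has both endpoint sequences sorted,
so it is its own canonical form.
-/

def nestingDefect (T : Multiset (ℕ × ℕ)) : ℕ :=
  (T.map fun p => (p.2 - p.1) * p.2).sum

lemma nestingDefect_uncross_lt {a b c d : ℕ} (hab : a < b) (hbc : b ≤ c) (hcd : c < d)
    (T₀ : Multiset (ℕ × ℕ)) :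
    nestingDefect ((a, c) ::ₘ (b, d) ::ₘ T₀) < nestingDefect ((a, d) ::ₘ (b, c) ::ₘ T₀) := by
  simp only [nestingDefect, Multiset.map_cons, Multiset.sum_cons]
  zify [(hab.trans_le hbc).le, (hab.trans_le (hbc.trans hcd.le)).le, hbc.trans hcd.le, hbc]
  have hgain : 0 < ((b : ℤ) - a) * (d - c) := mul_pos (by omega) (by omega)
  nlinarith

lemma canonical_congr {T T' : Multiset (ℕ × ℕ)} (hfst : T.map Prod.fst = T'.map Prod.fst)
    (hsnd : T.map Prod.snd = T'.map Prod.snd) : canonical T = canonical T' := by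
  rw [canonical, canonical, hfst, hsnd]

lemma canonical_coe_of_pairwise {L : List (ℕ × ℕ)} (hfst : (L.map Prod.fst).Pairwise (· ≤ ·))
    (hsnd : (L.map Prod.snd).Pairwise (· ≤ ·)) : canonical L = L := by
  have sort_fst : ((L : Multiset (ℕ × ℕ)).map Prod.fst).sort = L.map Prod.fst :=
    List.Perm.eq_of_pairwise' (Multiset.pairwise_sort _ _) hfst
      (by rw [← Multiset.coe_eq_coe, Multiset.sort_eq, Multiset.map_coe])
  have sort_snd : ((L : Multiset (ℕ × ℕ)).map Prod.snd).sort = L.map Prod.snd :=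
    List.Perm.eq_of_pairwise' (Multiset.pairwise_sort _ _) hsnd
      (by rw [← Multiset.coe_eq_coe, Multiset.sort_eq, Multiset.map_coe])
  rw [canonical, sort_fst, sort_snd, ← List.unzip_fst, ← List.unzip_snd, List.zip_unzip]

lemma canonical_eq_self_of_not_nested {T : Multiset (ℕ × ℕ)}
    (hT : ∀ p ∈ T, ∀ q ∈ T, p.1 < q.1 → p.2 ≤ q.2) : canonical T = T := by
  set L := ((T.map toLex).sort).map ofLex
  have hL : (L : Multiset (ℕ × ℕ)) = T := by
    rw [← Multiset.map_coe, Multiset.sort_eq, Multiset.map_map]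
    simp [Function.comp_def]
  have hmem : ∀ p ∈ L, p ∈ T := fun p hp => hL ▸ Multiset.mem_coe.mpr hp
  have hlex : L.Pairwise fun p q => toLex p ≤ toLex q :=
    List.pairwise_map.mpr (Multiset.pairwise_sort (T.map toLex) (· ≤ ·))
  simp only [Prod.Lex.toLex_le_toLex] at hlex
  rw [← hL]
  refine canonical_coe_of_pairwise (List.pairwise_map.mpr (hlex.imp ?_))
    (List.pairwise_map.mpr (hlex.imp_of_mem ?_))
  · rintro p q (h | h) <;> omega
  · rintro p q hp hq (h | h)
    exacts [hT p (hmem p hp) q (hmem q hq) h, h.2]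

lemma exists_eq_cons_cons {α : Type*} {T : Multiset α} {p q : α} (hp : p ∈ T) (hq : q ∈ T)
    (hpq : p ≠ q) : ∃ T₀, T = p ::ₘ q ::ₘ T₀ := by
  obtain ⟨T₁, rfl⟩ := Multiset.exists_cons_of_mem hp
  obtain ⟨T₀, rfl⟩ := Multiset.exists_cons_of_mem ((Multiset.mem_cons.mp hq).resolve_left hpq.symm)
  exact ⟨T₀, rfl⟩

theorem reflTransGen_swapStep_canonical (T : Multiset (ℕ × ℕ)) (hT : ∀ p ∈ T, p.1 ≤ p.2) :
    Relation.ReflTransGen SwapStep (canonical T) T := by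
  by_cases hnested : ∃ p ∈ T, ∃ q ∈ T, p.1 < q.1 ∧ q.2 < p.2
  · obtain ⟨⟨a, d⟩, hp, ⟨b, c⟩, hq, hab, hcd⟩ := hnested
    have hbc : b ≤ c := hT _ hq
    obtain ⟨T₀, hT₀⟩ := exists_eq_cons_cons hp hq fun h => hab.ne (congrArg Prod.fst h)
    set T' := (a, c) ::ₘ (b, d) ::ₘ T₀
    have hT' : ∀ p ∈ T', p.1 ≤ p.2 := by
      simp only [T', Multiset.mem_cons]
      rintro p (rfl | rfl | hp)
      exacts [by dsimp; omega, by dsimp; omega, hT p (by simp [hT₀, hp])]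
    have hcanon : canonical T' = canonical T :=
      canonical_congr (by simp [T', hT₀]) (by simp [T', hT₀, Multiset.cons_swap])
    have hstep : SwapStep T' T := ⟨a, b, c, d, hab.le, hbc, hcd.le, T₀, rfl, hT₀⟩
    have hdecrease : nestingDefect T' < nestingDefect T :=
      hT₀ ▸ nestingDefect_uncross_lt hab hbc hcd T₀
    exact hcanon ▸ (reflTransGen_swapStep_canonical T' hT').tail hstep
  · push Not at hnested
    rw [canonical_eq_self_of_not_nested hnested]
termination_by nestingDefect T

/-- Every family `U` of intervals over `{1,…,n}` can be obtained from its
canonical form `U*` by a finite sequence of right-endpoint swap operations, i.e.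
`(U*, U)` lies in the reflexive-transitive closure of the one-step swap relation. -/
theorem stmt_8 (n : ℕ) (U : Multiset (ℕ × ℕ))
    (hU : ∀ p ∈ U, 1 ≤ p.1 ∧ p.1 ≤ p.2 ∧ p.2 ≤ n) :
    Relation.ReflTransGen SwapStep (canonical U) U :=
  reflTransGen_swapStep_canonical U fun p hp => (hU p hp).2.1
end

section
/- Let U be a family of intervals over {1,…,n} and let U* be its canonical form. For every sub-multiset P* of U*, there exists a sub-multiset P of U with |P| = |P*| such that c_P(i) ≥ c_{P*}(i) for every point i ∈ {1,…,n}. -/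
theorem Multiset.le_or_eq_cons_of_le_cons {α : Type*} [DecidableEq α] {s t : Multiset α}
    {a : α} (h : s ≤ a ::ₘ t) : s ≤ t ∨ ∃ s₀ ≤ t, s = a ::ₘ s₀ := by
  by_cases ha : a ∈ s
  · exact .inr ⟨s.erase a, Multiset.erase_le_iff_le_cons.mpr h, (Multiset.cons_erase ha).symm⟩
  · exact .inl ((Multiset.le_cons_of_notMem ha).mp h)

theorem coverage_cons (x : ℕ × ℕ) (X : Multiset (ℕ × ℕ)) (i : ℕ) :
    coverage (x ::ₘ X) i = (if x.1 ≤ i ∧ i ≤ x.2 then 1 else 0) + coverage X i := by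
  unfold coverage
  split_ifs with h <;> simp [h, add_comm]

def Dominates (U V : Multiset (ℕ × ℕ)) : Prop :=
  ∀ Q ≤ V, ∃ P ≤ U, Multiset.card P = Multiset.card Q ∧
    ∀ i, coverage Q i ≤ coverage P i

namespace Dominates

theorem refl (U : Multiset (ℕ × ℕ)) : Dominates U U :=
  fun Q hQ => ⟨Q, hQ, rfl, fun _ => le_rfl⟩

theorem trans {U V W : Multiset (ℕ × ℕ)} (hUV : Dominates U V) (hVW : Dominates V W) :
    Dominates U W := by
  intro Q hQ
  obtain ⟨P', hP'V, hcard', hcov'⟩ := hVW Q hQ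
  obtain ⟨P, hPU, hcard, hcov⟩ := hUV P' hP'V
  exact ⟨P, hPU, hcard.trans hcard', fun i => (hcov' i).trans (hcov i)⟩

theorem cons {U V : Multiset (ℕ × ℕ)} (h : Dominates U V) (x : ℕ × ℕ) :
    Dominates (x ::ₘ U) (x ::ₘ V) := by
  intro Q hQ
  rcases Multiset.le_or_eq_cons_of_le_cons hQ with hQ | ⟨Q₀, hQ₀, rfl⟩
  · obtain ⟨P, hPU, hcard, hcov⟩ := h Q hQ
    exact ⟨P, hPU.trans (Multiset.le_cons_self U x), hcard, hcov⟩
  · obtain ⟨P, hPU, hcard, hcov⟩ := h Q₀ hQ₀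
    refine ⟨x ::ₘ P, Multiset.cons_le_cons x hPU, by simp [hcard], fun i => ?_⟩
    simpa only [coverage_cons] using Nat.add_le_add_left (hcov i) _

end Dominates

theorem dominates_uncross (p q : ℕ × ℕ) (R : Multiset (ℕ × ℕ)) (h₁ : p.1 ≤ q.1)
    (h₂ : q.2 ≤ p.2) : Dominates (p ::ₘ q ::ₘ R) ((p.1, q.2) ::ₘ (q.1, p.2) ::ₘ R) := by
  intro Q hQ
  have hR : R ≤ q ::ₘ R := Multiset.le_cons_self R q
  rcases Multiset.le_or_eq_cons_of_le_cons hQ with hQB | ⟨Q, hQB, rfl⟩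
  · rcases Multiset.le_or_eq_cons_of_le_cons hQB with hQR | ⟨Q, hQR, rfl⟩
    · exact ⟨Q, hQR.trans (hR.trans (Multiset.le_cons_self _ p)), rfl, fun _ => le_rfl⟩
    · refine ⟨p ::ₘ Q, Multiset.cons_le_cons p (hQR.trans hR), by simp, fun i => ?_⟩
      simp only [coverage_cons]
      split_ifs <;> omega
  · rcases Multiset.le_or_eq_cons_of_le_cons hQB with hQR | ⟨Q, hQR, rfl⟩
    · refine ⟨p ::ₘ Q, Multiset.cons_le_cons p (hQR.trans hR), by simp, fun i => ?_⟩
      simp only [coverage_cons]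
      split_ifs <;> omega
    · refine ⟨p ::ₘ q ::ₘ Q, Multiset.cons_le_cons p (Multiset.cons_le_cons q hQR), by simp,
        fun i => ?_⟩
      simp only [coverage_cons]
      split_ifs <;> omega

theorem canonical_congr_s9 {U V : Multiset (ℕ × ℕ)} (h₁ : U.map Prod.fst = V.map Prod.fst)
    (h₂ : U.map Prod.snd = V.map Prod.snd) : canonical U = canonical V := by
  rw [canonical, canonical, h₁, h₂]

theorem canonical_cons_of_forall_le (x : ℕ × ℕ) (W : Multiset (ℕ × ℕ))
    (h₁ : ∀ a ∈ W.map Prod.fst, x.1 ≤ a) (h₂ : ∀ b ∈ W.map Prod.snd, x.2 ≤ b) :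
    canonical (x ::ₘ W) = x ::ₘ canonical W := by
  simp only [canonical, Multiset.map_cons, Multiset.sort_cons _ _ _ h₁,
    Multiset.sort_cons _ _ _ h₂, List.zip_cons_cons, Multiset.cons_coe]

theorem exists_dominates_cons_canonical (U : Multiset (ℕ × ℕ)) (hU : U ≠ 0) :
    ∃ x W, Multiset.card W < Multiset.card U ∧ Dominates U (x ::ₘ W) ∧
      canonical U = x ::ₘ canonical W := by
  have hne : U.toFinset.Nonempty := Multiset.toFinset_nonempty.mpr hU
  obtain ⟨p, hp, hp_min⟩ := U.toFinset.exists_min_image Prod.fst hne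
  obtain ⟨q, hq, hq_min⟩ := U.toFinset.exists_min_image Prod.snd hne
  simp only [Multiset.mem_toFinset] at hp hq hp_min hq_min
  obtain ⟨W, hdom, hfst, hsnd⟩ : ∃ W, Dominates U ((p.1, q.2) ::ₘ W) ∧
      U.map Prod.fst = ((p.1, q.2) ::ₘ W).map Prod.fst ∧
      U.map Prod.snd = ((p.1, q.2) ::ₘ W).map Prod.snd := by
    by_cases hpq : p = q
    · subst hpq
      rw [← Multiset.cons_erase hp]
      exact ⟨U.erase p, Dominates.refl _, rfl, rfl⟩
    · obtain ⟨R, rfl⟩ : ∃ R, U = p ::ₘ q ::ₘ R := by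
        have hq' : q ∈ U.erase p := (Multiset.mem_erase_of_ne (Ne.symm hpq)).mpr hq
        exact ⟨_, by rw [Multiset.cons_erase hq', Multiset.cons_erase hp]⟩
      refine ⟨(q.1, p.2) ::ₘ R, dominates_uncross p q R (hp_min q hq) (hq_min p hp), ?_, ?_⟩
      · simp
      · simp [Multiset.cons_swap]
  have hcard : Multiset.card U = Multiset.card W + 1 := by
    simpa using congrArg Multiset.card hfst
  refine ⟨(p.1, q.2), W, by omega, hdom, ?_⟩
  rw [canonical_congr_s9 hfst hsnd]
  apply canonical_cons_of_forall_le
  · intro a ha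
    obtain ⟨r, hr, rfl⟩ := Multiset.mem_map.mp
      (show a ∈ U.map Prod.fst by rw [hfst, Multiset.map_cons]; exact Multiset.mem_cons_of_mem ha)
    exact hp_min r hr
  · intro b hb
    obtain ⟨r, hr, rfl⟩ := Multiset.mem_map.mp
      (show b ∈ U.map Prod.snd by rw [hsnd, Multiset.map_cons]; exact Multiset.mem_cons_of_mem hb)
    exact hq_min r hr

theorem dominates_canonical (U : Multiset (ℕ × ℕ)) : Dominates U (canonical U) := by
  rcases eq_or_ne U 0 with rfl | hU
  · simpa [canonical] using Dominates.refl 0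
  obtain ⟨x, W, hcard, hdom, hcan⟩ := exists_dominates_cons_canonical U hU
  rw [hcan]
  exact hdom.trans ((dominates_canonical W).cons x)
termination_by Multiset.card U

theorem stmt_9_general (n : ℕ) (U : Multiset (ℕ × ℕ))
    (Pstar : Multiset (ℕ × ℕ)) (hPstar : Pstar ≤ canonical U) :
    ∃ P : Multiset (ℕ × ℕ), P ≤ U ∧ Multiset.card P = Multiset.card Pstar ∧
      ∀ i ∈ Finset.Icc 1 n, coverage Pstar i ≤ coverage P i := by
  obtain ⟨P, hPU, hcard, hcov⟩ := dominates_canonical U Pstar hPstar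
  exact ⟨P, hPU, hcard, fun i _ => hcov i⟩

/-- For every family `U` of intervals over `{1,…,n}` and every
sub-multiset `P*` of the canonical form `U*`, there is a sub-multiset `P` of `U` with
`|P| = |P*|` and `c_P(i) ≥ c_{P*}(i)` for every point `i ∈ {1,…,n}`. -/
theorem stmt_9 (n : ℕ) (U : Multiset (ℕ × ℕ))
    (hU : ∀ p ∈ U, 1 ≤ p.1 ∧ p.1 ≤ p.2 ∧ p.2 ≤ n)
    (Pstar : Multiset (ℕ × ℕ)) (hPstar : Pstar ≤ canonical U) :
    ∃ P : Multiset (ℕ × ℕ), P ≤ U ∧ Multiset.card P = Multiset.card Pstar ∧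
      ∀ i ∈ Finset.Icc 1 n, coverage Pstar i ≤ coverage P i :=
  stmt_9_general n U Pstar hPstar
end

section
/- Consider a Voter Interval approval election: voters are {1,…,n}, C is a finite set of candidates, and each candidate c ∈ C has a nonempty supporter interval I_c ⊆ {1,…,n} (the set of voters approving c, which is an interval of consecutive voters). Each voter v has a non-increasing weight sequence w^v : ℕ → ℝ with 1 ≥ w^v_1 ≥ w^v_2 ≥ … ≥ 0, and the score of a committee W ⊆ C is score(W) = ∑_{v=1}^n ∑_{i=1}^{|{c ∈ W : v ∈ I_c}|} w^v_i. Then for every integer k ≥ 1 and all committees S, S' ⊆ C with |S| = k − 1 and |S'| = k + 1, there exists a committee W ⊆ S ∪ S' with |W| = k and 2·score(W) ≥ score(S) + score(S'). In particular, the maximum score of a size-k committee is a concave function of k on Voter Interval profiles. -/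
/-!
Let `D = S ∩ S'` and `T = S ∆ S'`, so `|T| = 2(k - |D|)`. For each voter the weight sum
`F(m) = ∑_{i ≤ m} w_i` is concave in the number `m` of approved members, so the voter's
contributions to `score S + score S'` are at most what she would get if her approved members
of `T` were split as evenly as possible between two committees containing `D`. It therefore
suffices to find `X ⊆ T` with `|X| = |T| / 2` such that twice the score of `D ∪ X` is at least
the total of these evenly split values.

If two intervals of `T` are nested, `a ⊇ b`, put `a` into `X` and recurse on `T \ {a, b}`:
every voter approving `b` also approves `a`, so by monotonicity of `F` nothing is lost.
Otherwise the intervals, sorted by left endpoint, are also sorted by right endpoint, so each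
voter approves a block of consecutive ranks; taking the members of even rank for `X`
splits every block evenly, and `X` or `T \ X` is at least as good as the average.
-/

open Finset

namespace VoterInterval

variable {C α : Type*} [LinearOrder α]

def numApproved (I : C → α × α) (W : Finset C) (v : α) : ℕ :=
  #{c ∈ W | (I c).1 ≤ v ∧ v ≤ (I c).2}

section numApproved

variable (I : C → α × α)

lemma numApproved_union [DecidableEq C] {A B : Finset C} (h : Disjoint A B) (v : α) :
    numApproved I (A ∪ B) v = numApproved I A v + numApproved I B v := by
  rw [numApproved, filter_union, card_union_of_disjoint (disjoint_filter_filter h)]; rfl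

lemma numApproved_union_add_inter [DecidableEq C] (A B : Finset C) (v : α) :
    numApproved I (A ∪ B) v + numApproved I (A ∩ B) v =
      numApproved I A v + numApproved I B v := by
  rw [numApproved, numApproved, filter_union, filter_inter_distrib, card_union_add_card_inter]; rfl

lemma numApproved_singleton (a : C) (v : α) :
    numApproved I {a} v = if (I a).1 ≤ v ∧ v ≤ (I a).2 then 1 else 0 := by
  rw [numApproved, filter_singleton]; split_ifs <;> rfl

end numApproved

lemma add_le_add_halves {F : ℕ → ℝ} (hF : Antitone fun m => F (m + 1) - F m) (a b : ℕ) :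
    F a + F b ≤ F ((a + b) / 2) + F ((a + b + 1) / 2) := by
  wlog hab : a ≤ b generalizing a b
  · have := this b a (by omega)
    rwa [add_comm b a, add_comm (F b)] at this
  set h := (a + b + 1) / 2
  obtain ⟨δ, hb⟩ : ∃ δ, b = h + δ := ⟨b - h, by omega⟩
  have hl : (a + b) / 2 = a + δ := by omega
  have increment (m : ℕ) : F (m + δ) - F m = ∑ i ∈ range δ, (F (m + i + 1) - F (m + i)) :=
    (sum_range_sub (fun i => F (m + i)) δ).symm
  have : F (h + δ) - F h ≤ F (a + δ) - F a := by
    rw [increment, increment]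
    exact sum_le_sum fun i _ => hF (by omega)
  rw [hl, ← hb] at *
  linarith

lemma card_filter_even_Ico (a b : ℕ) : #{j ∈ Ico a b | j % 2 = 0} = (b + 1) / 2 - (a + 1) / 2 := by
  induction b with
  | zero => simp
  | succ b ih =>
    rcases le_or_gt a b with hab | hab
    · rw [Nat.Ico_succ_right_eq_insert_Ico hab, filter_insert]
      split_ifs
      · rw [card_insert_of_notMem (by simp)]; omega
      · omega
    · rw [Ico_eq_empty (by omega)]; simp; omega

section Rank

variable {β : Type*} [LinearOrder β] {T : Finset C} {key : C → β}

variable (T key) in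
def rank (a : C) : ℕ := #{b ∈ T | key b < key a}

lemma rank_lt_card_iff (hkey : Set.InjOn key T) {D : Finset C} (hDT : D ⊆ T)
    (hD : ∀ b ∈ D, ∀ c ∈ T, key c < key b → c ∈ D) {a : C} (ha : a ∈ T) :
    rank T key a < #D ↔ a ∈ D := by
  constructor
  · intro h
    by_contra haD
    have : D ⊆ {b ∈ T | key b < key a} := by
      intro b hb
      refine mem_filter.2 ⟨hDT hb, lt_of_not_ge fun hab => haD ?_⟩
      rcases hab.lt_or_eq with hlt | heq
      · exact hD b hb a ha hlt
      · rwa [hkey ha (hDT hb) heq]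
    exact absurd (card_le_card this) (not_le.2 h)
  · intro haD
    have : {b ∈ T | key b < key a} ⊂ D := by
      refine ⟨fun c hc => hD a haD c (mem_filter.1 hc).1 (mem_filter.1 hc).2, fun h => ?_⟩
      exact lt_irrefl _ (mem_filter.1 (h haD)).2
    exact card_lt_card this

lemma rank_lt_rank {a b : C} (ha : a ∈ T) (hab : key a < key b) : rank T key a < rank T key b := by
  refine card_lt_card ⟨fun c hc => ?_, fun h => ?_⟩
  · exact mem_filter.2 ⟨(mem_filter.1 hc).1, (mem_filter.1 hc).2.trans hab⟩
  · exact lt_irrefl _ (mem_filter.1 (h (mem_filter.2 ⟨ha, hab⟩))).2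

lemma rank_injOn (hkey : Set.InjOn key T) : Set.InjOn (rank T key) T := by
  intro a ha b hb h
  rcases lt_trichotomy (key a) (key b) with hlt | heq | hgt
  · exact absurd h (rank_lt_rank ha hlt).ne
  · exact hkey ha hb heq
  · exact absurd h (rank_lt_rank hb hgt).ne'

lemma card_filter_rank (hkey : Set.InjOn key T) (p : ℕ → Prop) [DecidablePred p] :
    #{a ∈ T | p (rank T key a)} = #{j ∈ range #T | p j} := by
  have himage : T.image (rank T key) = range #T := by
    refine eq_of_subset_of_card_le (fun j hj => ?_) ?_
    · obtain ⟨a, ha, rfl⟩ := mem_image.1 hj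
      exact mem_range.2 ((rank_lt_card_iff hkey subset_rfl (fun _ _ c hc _ => hc) ha).2 ha)
    · rw [card_range, card_image_of_injOn (rank_injOn hkey)]
  rw [← himage, filter_image, card_image_of_injOn ((rank_injOn hkey).mono (filter_subset _ _))]

end Rank

theorem exists_balanced_subset_of_not_nested (I : C → α × α) (T : Finset C)
    (hT : ∀ a ∈ T, ∀ b ∈ T, (I a).1 ≤ (I b).1 → (I b).2 ≤ (I a).2 → a = b) :
    ∃ X ⊆ T, #X = (#T + 1) / 2 ∧ ∀ v, numApproved I X v = numApproved I T v / 2 ∨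
      numApproved I X v = (numApproved I T v + 1) / 2 := by
  set key : C → α := fun c => (I c).1
  have hkey : Set.InjOn key T := fun a ha b hb h => by
    rcases le_total (I a).2 (I b).2 with hr | hr
    · exact (hT b hb a ha h.symm.le hr).symm
    · exact hT a ha b hb h.le hr
  have hright : ∀ a ∈ T, ∀ b ∈ T, key a < key b → (I a).2 < (I b).2 := fun a ha b hb h =>
    lt_of_not_ge fun hr => h.ne (congrArg key (hT a ha b hb h.le hr))
  refine ⟨{a ∈ T | rank T key a % 2 = 0}, filter_subset _ _, ?_, fun v => ?_⟩
  · rw [card_filter_rank hkey (fun j => j % 2 = 0), range_eq_Ico, card_filter_even_Ico,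
      Nat.sub_zero]
  set lo := #{b ∈ T | (I b).2 < v}
  set hi := #{b ∈ T | (I b).1 ≤ v}
  have hlo : ∀ a ∈ T, rank T key a < lo ↔ (I a).2 < v := fun a ha =>
    (rank_lt_card_iff hkey (filter_subset _ _) (fun b hb c hc hcb =>
      mem_filter.2 ⟨hc, (hright c hc b (mem_filter.1 hb).1 hcb).trans (mem_filter.1 hb).2⟩)
      ha).trans (by simp [ha])
  have hhi : ∀ a ∈ T, rank T key a < hi ↔ (I a).1 ≤ v := fun a ha =>
    (rank_lt_card_iff hkey (filter_subset _ _) (fun b hb c hc hcb =>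
      mem_filter.2 ⟨hc, hcb.le.trans (mem_filter.1 hb).2⟩) ha).trans (by simp [ha, key])
  have hhiT : hi ≤ #T := card_filter_le _ _
  have happ : ∀ a ∈ T, ((I a).1 ≤ v ∧ v ≤ (I a).2) ↔ (lo ≤ rank T key a ∧ rank T key a < hi) :=
    fun a ha => by rw [← hhi a ha, ← not_lt (a := (I a).2), ← hlo a ha, not_lt, and_comm]
  have hcT : numApproved I T v = hi - lo := by
    rw [numApproved, filter_congr happ]
    refine (card_filter_rank hkey fun j => lo ≤ j ∧ j < hi).trans ?_
    rw [← Nat.card_Ico]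
    congr 1
    ext j
    simp only [mem_filter, mem_range, mem_Ico]
    omega
  have hcX : numApproved I {a ∈ T | rank T key a % 2 = 0} v = (hi + 1) / 2 - (lo + 1) / 2 := by
    rw [numApproved, filter_filter, filter_congr fun a ha => and_congr_right' (happ a ha)]
    refine (card_filter_rank hkey fun j => j % 2 = 0 ∧ lo ≤ j ∧ j < hi).trans ?_
    rw [← card_filter_even_Ico]
    congr 1
    ext j
    simp only [mem_filter, mem_range, mem_Ico]
    omega
  omega

section Score

variable (V : Finset α) (F : α → ℕ → ℝ) (I : C → α × α)

/-- The joint score of two committees `D ∪ X`, `D ∪ (T \ X)` if every voter's approved members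
of `T` were split evenly between them; `o v` is the number of members of `D` approved by `v`. -/
def evenSplitScore (o : α → ℕ) (T : Finset C) : ℝ :=
  ∑ v ∈ V, (F v (o v + numApproved I T v / 2) + F v (o v + (numApproved I T v + 1) / 2))

variable [DecidableEq C]

lemma exists_evenSplitScore_le_of_not_nested (t : ℕ) (T : Finset C) (hTcard : #T = 2 * t)
    (hT : ∀ a ∈ T, ∀ b ∈ T, (I a).1 ≤ (I b).1 → (I b).2 ≤ (I a).2 → a = b) (o : α → ℕ) :
    ∃ X ⊆ T, #X = t ∧
      evenSplitScore V F I o T ≤ 2 * ∑ v ∈ V, F v (o v + numApproved I X v) := by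
  obtain ⟨X, hXT, hXcard, hX⟩ := exists_balanced_subset_of_not_nested I T hT
  have hsplit (v : α) : numApproved I T v = numApproved I X v + numApproved I (T \ X) v := by
    rw [← numApproved_union I disjoint_sdiff, union_sdiff_of_subset hXT]
  have hsum : evenSplitScore V F I o T =
      ∑ v ∈ V, F v (o v + numApproved I X v) + ∑ v ∈ V, F v (o v + numApproved I (T \ X) v) := by
    rw [evenSplitScore, ← sum_add_distrib]
    refine sum_congr rfl fun v _ => ?_
    have := hsplit v
    rcases hX v with h | h
    · rw [h, show numApproved I (T \ X) v = (numApproved I T v + 1) / 2 by omega]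
    · rw [h, show numApproved I (T \ X) v = numApproved I T v / 2 by omega, add_comm]
  rcases le_total (∑ v ∈ V, F v (o v + numApproved I (T \ X) v))
      (∑ v ∈ V, F v (o v + numApproved I X v)) with h | h
  · exact ⟨X, hXT, by omega, by linarith⟩
  · refine ⟨T \ X, sdiff_subset, by rw [card_sdiff_of_subset hXT]; omega, by linarith⟩

variable {V F I}

lemma evenSplitScore_insert_insert_le (hF : ∀ v ∈ V, Monotone (F v)) {a b : C}
    (hab₁ : (I a).1 ≤ (I b).1) (hab₂ : (I b).2 ≤ (I a).2) {T : Finset C} (haT : a ∉ insert b T)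
    (hbT : b ∉ T) (o : α → ℕ) :
    evenSplitScore V F I o (insert a (insert b T))
      ≤ evenSplitScore V F I (fun v => o v + numApproved I {a} v) T := by
  refine sum_le_sum fun v hv => ?_
  dsimp only
  rw [insert_eq, numApproved_union I (disjoint_singleton_left.2 haT), insert_eq,
    numApproved_union I (disjoint_singleton_left.2 hbT)]
  have hba : numApproved I {b} v ≤ numApproved I {a} v ∧ numApproved I {a} v ≤ 1 := by
    rw [numApproved_singleton, numApproved_singleton]
    by_cases hvb : (I b).1 ≤ v ∧ v ≤ (I b).2
    · simp [hvb, hab₁.trans hvb.1, hvb.2.trans hab₂]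
    · simp only [hvb, if_false]
      split_ifs <;> omega
  exact add_le_add (hF v hv (by omega)) (hF v hv (by omega))

theorem exists_evenSplitScore_le (hF : ∀ v ∈ V, Monotone (F v)) (t : ℕ) (T : Finset C)
    (hT : #T = 2 * t) (o : α → ℕ) :
    ∃ X ⊆ T, #X = t ∧
      evenSplitScore V F I o T ≤ 2 * ∑ v ∈ V, F v (o v + numApproved I X v) := by
  induction t generalizing T o with
  | zero =>
    exact exists_evenSplitScore_le_of_not_nested V F I 0 T hT (by simp [card_eq_zero.1 hT]) o
  | succ t ih =>
    by_cases hnest : ∀ a ∈ T, ∀ b ∈ T, (I a).1 ≤ (I b).1 → (I b).2 ≤ (I a).2 → a = b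
    · exact exists_evenSplitScore_le_of_not_nested V F I _ T hT hnest o
    · push Not at hnest
      obtain ⟨a, ha, b, hb, hab₁, hab₂, hne⟩ := hnest
      set T' := (T.erase a).erase b
      have hbT' : b ∉ T' := notMem_erase b _
      have haT' : a ∉ insert b T' := by simp [T', hne]
      have hT' : insert a (insert b T') = T := by
        rw [insert_erase (mem_erase.2 ⟨hne.symm, hb⟩), insert_erase ha]
      obtain ⟨X, hXT', hXcard, hX⟩ :=
        ih T' (by simp [T', card_erase_of_mem, ha, hb, hne.symm, hT]; omega)
          fun v => o v + numApproved I {a} v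
      have haX : a ∉ X := fun h => haT' (mem_insert_of_mem (hXT' h))
      refine ⟨insert a X, ?_, by rw [card_insert_of_notMem haX, hXcard], ?_⟩
      · rw [← hT']
        exact insert_subset_insert a (hXT'.trans (subset_insert b T'))
      · rw [← hT']
        refine (evenSplitScore_insert_insert_le hF hab₁ hab₂ haT' hbT' o).trans (hX.trans_eq ?_)
        simp only [insert_eq, numApproved_union I (disjoint_singleton_left.2 haX), add_assoc]

theorem exists_committee_two_mul_le (hmono : ∀ v ∈ V, Monotone (F v))
    (hconc : ∀ v ∈ V, Antitone fun m => F v (m + 1) - F v m) (S S' : Finset C)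
    (hcard : #S + 2 = #S') :
    ∃ W ⊆ S ∪ S', #W = #S + 1 ∧
      ∑ v ∈ V, F v (numApproved I S v) + ∑ v ∈ V, F v (numApproved I S' v)
        ≤ 2 * ∑ v ∈ V, F v (numApproved I W v) := by
  set D := S ∩ S'
  set T := (S ∪ S') \ D
  have hDS : D ⊆ S := inter_subset_left
  have hDT : D ∪ T = S ∪ S' := union_sdiff_of_subset inter_subset_union
  have hDTdisj : Disjoint D T := disjoint_sdiff
  have hcardDT : #(S ∪ S') + #D = #S + #S' := card_union_add_card_inter S S'
  have happDT (v : α) : numApproved I (S ∪ S') v + numApproved I D v =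
      numApproved I S v + numApproved I S' v := numApproved_union_add_inter I S S' v
  clear_value T D
  have hTcard : #T = 2 * (#S + 1 - #D) := by
    have := card_le_card hDS
    rw [← hDT, card_union_of_disjoint hDTdisj] at hcardDT
    omega
  obtain ⟨X, hXT, hXcard, hX⟩ := exists_evenSplitScore_le hmono _ T hTcard (numApproved I D)
  have hDX : Disjoint D X := hDTdisj.mono_right hXT
  refine ⟨D ∪ X, ?_, ?_, ?_⟩
  · rw [← hDT]
    exact union_subset_union subset_rfl hXT
  · have := card_le_card hDS
    rw [card_union_of_disjoint hDX, hXcard]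
    omega
  · rw [← sum_add_distrib]
    refine (sum_le_sum fun v hv => ?_).trans (hX.trans_eq ?_)
    · have := happDT v
      rw [← hDT, numApproved_union I hDTdisj] at this
      have := add_le_add_halves (hconc v hv) (numApproved I S v) (numApproved I S' v)
      rwa [show (numApproved I S v + numApproved I S' v) / 2 =
          numApproved I D v + numApproved I T v / 2 by omega,
        show (numApproved I S v + numApproved I S' v + 1) / 2 =
          numApproved I D v + (numApproved I T v + 1) / 2 by omega] at this
    · simp only [numApproved_union I hDX]

end Score

end VoterInterval

theorem stmt_12_general (n : ℕ) {C : Type*} [DecidableEq C]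
    (I : C → ℕ × ℕ)
    (w : ℕ → ℕ → ℝ)
    (hw0 : ∀ v ∈ Finset.Icc 1 n, ∀ i : ℕ, 0 ≤ w v i)
    (hwmono : ∀ v ∈ Finset.Icc 1 n, ∀ i : ℕ, 1 ≤ i → w v (i + 1) ≤ w v i)
    (score : Finset C → ℝ)
    (hscore : ∀ W : Finset C, score W = ∑ v ∈ Finset.Icc 1 n,
      ∑ i ∈ Finset.Icc 1 ((W.filter fun c => (I c).1 ≤ v ∧ v ≤ (I c).2).card), w v i)
    (k : ℕ) (hk : 1 ≤ k) (S S' : Finset C)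
    (hScard : S.card = k - 1) (hS'card : S'.card = k + 1) :
    ∃ W ⊆ S ∪ S', W.card = k ∧ score S + score S' ≤ 2 * score W := by
  have hmono : ∀ v ∈ Icc 1 n, Monotone fun m => ∑ i ∈ Icc 1 m, w v i := fun v hv =>
    monotone_nat_of_le_succ fun m => by
      rw [sum_Icc_succ_top (by omega)]
      linarith [hw0 v hv (m + 1)]
  have hconc : ∀ v ∈ Icc 1 n,
      Antitone fun m => ∑ i ∈ Icc 1 (m + 1), w v i - ∑ i ∈ Icc 1 m, w v i :=
    fun v hv => antitone_nat_of_succ_le fun m => by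
      simp only [sum_Icc_succ_top (Nat.le_add_left 1 _), add_sub_cancel_left]
      exact hwmono v hv (m + 1) (by omega)
  obtain ⟨W, hWS, hWcard, hW⟩ :=
    VoterInterval.exists_committee_two_mul_le (I := I) hmono hconc S S' (by omega)
  refine ⟨W, hWS, by omega, ?_⟩
  rw [hscore, hscore, hscore]
  exact hW

/-- concavity of the optimal Generalized Thiele score on Voter Interval
profiles: Voters are `{1,…,n}`, `C` is a finite set of candidates, each candidate `c`
has a nonempty supporter interval `{(I c).1, …, (I c).2} ⊆ {1,…,n}`.  Each voter `v`
has a non-increasing weight sequence `w v : ℕ → ℝ` with `1 ≥ w v 1 ≥ w v 2 ≥ … ≥ 0`,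
and `score W = ∑_{v=1}^n ∑_{i=1}^{|{c ∈ W : v ∈ I c}|} w v i`.  Then for every `k ≥ 1`
and committees `S, S'` with `|S| = k − 1`, `|S'| = k + 1`, there is a committee
`W ⊆ S ∪ S'` with `|W| = k` and `2·score W ≥ score S + score S'`. -/
theorem stmt_12 (n : ℕ) {C : Type*} [Fintype C] [DecidableEq C]
    (I : C → ℕ × ℕ)
    (hI : ∀ c, 1 ≤ (I c).1 ∧ (I c).1 ≤ (I c).2 ∧ (I c).2 ≤ n)
    (w : ℕ → ℕ → ℝ)
    (hw1 : ∀ v ∈ Finset.Icc 1 n, w v 1 ≤ 1)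
    (hw0 : ∀ v ∈ Finset.Icc 1 n, ∀ i : ℕ, 0 ≤ w v i)
    (hwmono : ∀ v ∈ Finset.Icc 1 n, ∀ i : ℕ, 1 ≤ i → w v (i + 1) ≤ w v i)
    (score : Finset C → ℝ)
    (hscore : ∀ W : Finset C, score W = ∑ v ∈ Finset.Icc 1 n,
      ∑ i ∈ Finset.Icc 1 ((W.filter fun c => (I c).1 ≤ v ∧ v ≤ (I c).2).card), w v i)
    (k : ℕ) (hk : 1 ≤ k) (S S' : Finset C)
    (hScard : S.card = k - 1) (hS'card : S'.card = k + 1) :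
    ∃ W ⊆ S ∪ S', W.card = k ∧ score S + score S' ≤ 2 * score W :=
  stmt_12_general n I w hw0 hwmono score hscore k hk S S' hScard hS'card
end
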